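/- For every pair of integers k and j, the operation (x, y) ↦ x ▷ᵏ Fʲ(y), where F(y) = y ▷ y, makes the underlying set of any rack into a rack (it is left self-distributive and its left multiplications are bijections), and every rack homomorphism remains a homomorphism for this new operation. -/

import Mathlib

/-!
Left multiplications `act' x` and the map `F` are rack automorphisms, and conjugating by an
automorphism `σ` moves left multiplications along it: `act' (σ y) = σ * act' y * σ⁻¹`. Since `F`
commutes with every `act' x`, this gives `act' (x ◃ᵏ Fʲ y) = (act' x)ᵏ * act' y * (act' x)⁻ᵏ`,
and self-distributivity of the new operation becomes an identity in `Equiv.Perm R`.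
A rack homomorphism intertwines `act' x` with `act' (f x)` and `F` with `F`, hence also their
integer powers.
-/

open Quandles

/-- The operation `(x, y) ↦ x ◃ᵏ Fʲ(y)` on a rack, where `F y = y ◃ y`. -/
def rackPowOp (R : Type*) [Rack R] (k j : ℤ) (x y : R) : R :=
  (Rack.act' x ^ k) ((Rack.selfApplyEquiv R ^ j) y)

theorem Function.Semiconj.perm_zpow {α β : Type*} {f : α → β} {σ : Equiv.Perm α}
    {τ : Equiv.Perm β} (h : Function.Semiconj f σ τ) (n : ℤ) :
    Function.Semiconj f ⇑(σ ^ n) ⇑(τ ^ n) := by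
  have hpow (m : ℕ) : Function.Semiconj f ⇑(σ ^ m) ⇑(τ ^ m) := h.iterate_right m
  cases n with
  | ofNat m => exact hpow m
  | negSucc m =>
    simp only [zpow_negSucc]
    exact (hpow (m + 1)).inverses_right (Equiv.apply_symm_apply _) (Equiv.symm_apply_apply _)

namespace Rack

def autSubgroup (R : Type*) [Rack R] : Subgroup (Equiv.Perm R) where
  carrier := {σ | ∀ x y, σ (x ◃ y) = σ x ◃ σ y}
  one_mem' _ _ := rfl
  mul_mem' hσ hτ x y := by rw [Equiv.Perm.mul_apply, hτ x y, hσ]; rfl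
  inv_mem' {σ} hσ x y := σ.injective <| by
    rw [hσ]; simp only [Equiv.Perm.coe_inv, Equiv.apply_symm_apply]

variable {R : Type*} [Rack R]

theorem act'_mem_autSubgroup (x : R) : act' x ∈ autSubgroup R :=
  fun _ _ => self_distrib

theorem selfApplyEquiv_mem_autSubgroup : selfApplyEquiv R ∈ autSubgroup R := fun x y =>
  show (x ◃ y) ◃ (x ◃ y) = (x ◃ x) ◃ (y ◃ y) by rw [self_act_act_eq, ← self_distrib]

theorem act'_apply_of_mem_autSubgroup {σ : Equiv.Perm R} (hσ : σ ∈ autSubgroup R) (y : R) :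
    act' (σ y) = σ * act' y * σ⁻¹ := by
  ext z
  simp only [Equiv.Perm.mul_apply, act'_apply, hσ y, Equiv.Perm.coe_inv, Equiv.apply_symm_apply]

theorem commute_act'_selfApplyEquiv (x : R) : Commute (act' x) (selfApplyEquiv R) :=
  Equiv.ext fun _ => self_distrib

theorem act'_selfApplyEquiv_zpow_apply (j : ℤ) (y : R) :
    act' ((selfApplyEquiv R ^ j) y) = act' y := by
  rw [act'_apply_of_mem_autSubgroup (zpow_mem selfApplyEquiv_mem_autSubgroup j),
    ((commute_act'_selfApplyEquiv y).zpow_right j).symm.mul_inv_cancel]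

end Rack

open Rack

section

variable {R : Type*} [Rack R]

theorem rackPowOp_eq (k j : ℤ) (x : R) :
    rackPowOp R k j x = ⇑(act' x ^ k * selfApplyEquiv R ^ j) :=
  rfl

theorem act'_rackPowOp (k j : ℤ) (x y : R) :
    act' (rackPowOp R k j x y) = act' x ^ k * act' y * (act' x ^ k)⁻¹ := by
  rw [rackPowOp, act'_apply_of_mem_autSubgroup (zpow_mem (act'_mem_autSubgroup x) k),
    act'_selfApplyEquiv_zpow_apply]

theorem rackPowOp_self_distrib (k j : ℤ) (x y z : R) :
    rackPowOp R k j x (rackPowOp R k j y z) =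
      rackPowOp R k j (rackPowOp R k j x y) (rackPowOp R k j x z) := by
  set Φ := selfApplyEquiv R ^ j
  have hx : Commute (act' x ^ k) Φ := (commute_act'_selfApplyEquiv x).zpow_zpow k j
  have hy : Commute (act' y ^ k) Φ := (commute_act'_selfApplyEquiv y).zpow_zpow k j
  rw [rackPowOp_eq _ _ (rackPowOp R k j x y), act'_rackPowOp, conj_zpow]
  simp only [rackPowOp_eq, ← Equiv.Perm.mul_apply]
  congr 1
  calc act' x ^ k * Φ * (act' y ^ k * Φ)
      = act' x ^ k * (Φ * act' y ^ k) * Φ := by simp only [mul_assoc]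
    _ = act' x ^ k * act' y ^ k * (act' x ^ k)⁻¹ * (Φ * act' x ^ k) * Φ := by
      rw [← hy.eq, ← hx.eq]; group
    _ = act' x ^ k * act' y ^ k * (act' x ^ k)⁻¹ * Φ * (act' x ^ k * Φ) := by
      simp only [mul_assoc]

theorem ShelfHom.map_rackPowOp {S : Type*} [Rack S] (f : R →◃ S) (k j : ℤ) (x y : R) :
    f (rackPowOp R k j x y) = rackPowOp S k j (f x) (f y) := by
  have hact : Function.Semiconj f (act' x) (act' (f x)) := fun _ => f.map_act
  have hF : Function.Semiconj f (selfApplyEquiv R) (selfApplyEquiv S) := fun _ => f.map_act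
  rw [rackPowOp, rackPowOp, (hact.perm_zpow k).eq, (hF.perm_zpow j).eq]

end

/-- For all integers `k, j`, the operation `(x, y) ↦ x ◃ᵏ Fʲ(y)` makes any rack
into a rack (left self-distributive with bijective left multiplications), and
every rack homomorphism remains a homomorphism for this operation. -/
theorem rackPowOp_is_rack_and_functorial (R S : Type*) [Rack R] [Rack S]
    (k j : ℤ) :
    (∀ x y z : R, rackPowOp R k j x (rackPowOp R k j y z) =
        rackPowOp R k j (rackPowOp R k j x y) (rackPowOp R k j x z)) ∧
      (∀ x : R, Function.Bijective (rackPowOp R k j x)) ∧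
      ∀ (f : R →◃ S) (x y : R),
        f (rackPowOp R k j x y) = rackPowOp S k j (f x) (f y) :=
  ⟨rackPowOp_self_distrib k j, fun x => (act' x ^ k * selfApplyEquiv R ^ j).bijective,
    fun f => f.map_rackPowOp k j⟩
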